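/- For k, l ≥ 2, the theta graph Θ(2, 2k+1, 2l+1) is of non-QE class: the function f supported on vertices y_1, z_{2l}, y_{k+1}, z_l, y_{k+2}, z_{l−1}, x_1 with values u_1 = 2k+2l−4 (at y_1 and z_{2l}), u_2 = 11−4k−4l (at y_{k+1} and z_l), u_3 = 4k+4l−13 (at y_{k+2} and z_{l−1}), u_4 = −2u_1−2u_2−2u_3 (at x_1) has zero sum and satisfies Σ_{x,y} d(x,y) f(x) f(y) = 2(4k+4l−13) > 0. -/

import Mathlib

/-- The vertex set of the theta graph `Θ(a,b,c)`: two endpoints `s`, `t` together with the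
internal vertices `x_1,…,x_{a-1}`, `y_1,…,y_{b-1}`, `z_1,…,z_{c-1}` of the three paths
(`x i` stands for `x_{i+1}`, etc.). -/
inductive ThetaV (a b c : ℕ) : Type
  | s : ThetaV a b c
  | t : ThetaV a b c
  | x : Fin (a - 1) → ThetaV a b c
  | y : Fin (b - 1) → ThetaV a b c
  | z : Fin (c - 1) → ThetaV a b c
deriving DecidableEq, Fintype

/-- Generating relation for the edges of the theta graph `Θ(a,b,c)`. -/
def thetaRel (a b c : ℕ) : ThetaV a b c → ThetaV a b c → Prop
  | .s, .t => a = 1 ∨ b = 1 ∨ c = 1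
  | .s, .x i => (i : ℕ) = 0
  | .s, .y i => (i : ℕ) = 0
  | .s, .z i => (i : ℕ) = 0
  | .t, .x i => (i : ℕ) = a - 2
  | .t, .y i => (i : ℕ) = b - 2
  | .t, .z i => (i : ℕ) = c - 2
  | .x i, .x j => (j : ℕ) = (i : ℕ) + 1
  | .y i, .y j => (j : ℕ) = (i : ℕ) + 1
  | .z i, .z j => (j : ℕ) = (i : ℕ) + 1
  | _, _ => False

/-- The theta graph `Θ(a,b,c)`: three internally disjoint paths of lengths `a`, `b`, `c`
joining the two common endpoints `s` and `t`. -/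
def thetaGraph (a b c : ℕ) : SimpleGraph (ThetaV a b c) :=
  SimpleGraph.fromRel (thetaRel a b c)

/-- A Tanaka quintuple in a graph `G`. -/
def TanakaQuintuple {V : Type*} (G : SimpleGraph V) (v1 v2 v3 v4 v5 : V) : Prop :=
  G.Adj v1 v2 ∧ G.Adj v3 v4 ∧
  G.dist v1 v3 = G.dist v2 v4 ∧
  G.dist v1 v4 = G.dist v1 v3 + 1 ∧
  G.dist v2 v3 = G.dist v1 v3 + 1 ∧
  G.dist v5 v2 = G.dist v5 v1 + 1 ∧
  G.dist v5 v3 = G.dist v5 v4 + 1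

/-!
The distance in `Θ(2, b, c)` has a closed form: the `y`- and `z`-paths form a cycle of length
`b + c`, and a shortest walk either stays on that cycle or uses the path `s, x₁, t` of length `2`.
Explicit walks bound the distance by this formula from above; the formula is `1`-Lipschitz along
edges and vanishes on the diagonal, which bounds the distance from below. Since `f` is a
combination of point masses, its quadratic form is the finite sum `∑ᵢⱼ d(pᵢ, pⱼ) uᵢ uⱼ` over the
seven support points, and the formula gives the `7 × 7` distance table that evaluates it to
`2(4k + 4l - 13)`.
-/

namespace SimpleGraph

variable {V : Type*} {G : SimpleGraph V}

theorem Walk.le_add_length_of_adj {φ : V → ℕ} (hφ : ∀ u w, G.Adj u w → φ w ≤ φ u + 1)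
    {v w : V} (p : G.Walk v w) : φ w ≤ φ v + p.length := by
  induction p with
  | nil => simp
  | cons h _ ih =>
    rw [Walk.length_cons]
    have := hφ _ _ h
    omega

theorem le_add_edist_of_adj {φ : V → ℕ} (hφ : ∀ u w, G.Adj u w → φ w ≤ φ u + 1) (v w : V) :
    (φ w : ℕ∞) ≤ φ v + G.edist v w := by
  cases h : G.edist v w with
  | top => simp
  | coe n =>
    obtain ⟨p, hp⟩ := exists_walk_of_edist_eq_coe h
    exact_mod_cast hp ▸ p.le_add_length_of_adj hφ

theorem edist_le_of_adj_succ {f : ℕ → V} {m n : ℕ} (hmn : m ≤ n)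
    (h : ∀ i, m ≤ i → i < n → G.Adj (f i) (f (i + 1))) :
    G.edist (f m) (f n) ≤ (n - m : ℕ) := by
  induction n, hmn using Nat.le_induction with
  | base => simp
  | succ n hmn ih =>
    calc G.edist (f m) (f (n + 1)) ≤ G.edist (f m) (f n) + G.edist (f n) (f (n + 1)) :=
          G.edist_triangle
      _ ≤ (n - m : ℕ) + 1 := by
          gcongr
          · exact ih fun i hi hin => h i hi (by omega)
          · exact (edist_eq_one_iff_adj.mpr (h n hmn (by omega))).le
      _ = (n + 1 - m : ℕ) := by rw [Nat.sub_add_comm hmn]; push_cast; rfl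

end SimpleGraph

/-- The distance between positions `p, q < n` on a cycle of length `n`. -/
def cycDist (n p q : ℕ) : ℕ := min (Nat.dist p q) (n - Nat.dist p q)

theorem cycDist_comm (n p q : ℕ) : cycDist n p q = cycDist n q p := by
  simp only [cycDist, Nat.dist_comm]

@[simp] theorem cycDist_self (n p : ℕ) : cycDist n p p = 0 := by
  simp [cycDist]

theorem cycDist_triangle {n p q r : ℕ} (hp : p < n) (hq : q < n) (hr : r < n) :
    cycDist n p r ≤ cycDist n p q + cycDist n q r := by
  simp only [cycDist, Nat.dist]
  omega

theorem cycDist_of_le {n p q : ℕ} (hpq : p ≤ q) :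
    cycDist n p q = min (q - p) (n - (q - p)) := by
  simp only [cycDist, Nat.dist]; omega

theorem cycDist_of_ge {n p q : ℕ} (hpq : q ≤ p) :
    cycDist n p q = min (p - q) (n - (p - q)) := by
  simp only [cycDist, Nat.dist]; omega

theorem cycDist_of_le_of_two_mul_le {n p q : ℕ} (hpq : p ≤ q) (h : 2 * (q - p) ≤ n) :
    cycDist n p q = q - p := by
  simp only [cycDist, Nat.dist]; omega

theorem cycDist_of_le_of_le_two_mul {n p q : ℕ} (hpq : p ≤ q) (h : n ≤ 2 * (q - p)) :
    cycDist n p q = n - (q - p) := by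
  simp only [cycDist, Nat.dist]; omega

namespace ThetaV

variable {b c : ℕ}

def mid : ThetaV 2 b c := x 0

@[simp] theorem s_ne_mid : (s : ThetaV 2 b c) ≠ mid := by simp [mid]

@[simp] theorem t_ne_mid : (t : ThetaV 2 b c) ≠ mid := by simp [mid]

theorem x_eq_mid (i : Fin (2 - 1)) : (x i : ThetaV 2 b c) = mid :=
  congrArg x (Subsingleton.elim (α := Fin 1) i 0)

/-- Position on the cycle `s, y₁, …, t, z_{c-1}, …, z₁` of length `b + c`; junk value `0` at
`mid`. -/
def pos : ThetaV 2 b c → ℕ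
  | s => 0
  | t => b
  | x _ => 0
  | y i => i + 1
  | z j => b + c - 1 - j

@[simp] theorem pos_s : (s : ThetaV 2 b c).pos = 0 := rfl

@[simp] theorem pos_t : (t : ThetaV 2 b c).pos = b := rfl

theorem pos_lt_add (hc : 0 < c) (v : ThetaV 2 b c) : v.pos < b + c := by
  cases v <;> simp only [pos] <;> omega

def ofPos (b c p : ℕ) : ThetaV 2 b c :=
  if h₀ : p = 0 then s
  else if hy : p < b then y ⟨p - 1, by omega⟩
  else if h₁ : p = b then t
  else if hz : p < b + c then z ⟨b + c - 1 - p, by omega⟩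
  else s

@[simp] theorem ofPos_zero : ofPos b c 0 = s := rfl

theorem ofPos_add (hc : 0 < c) : ofPos b c (b + c) = s := by
  unfold ofPos; split_ifs <;> first | rfl | omega

theorem pos_ofPos {p : ℕ} (hp : p < b + c) : (ofPos b c p).pos = p := by
  unfold ofPos; split_ifs <;> simp only [pos] <;> omega

theorem ofPos_ne_mid (p : ℕ) : ofPos b c p ≠ mid := by
  unfold ofPos; split_ifs <;> simp [mid]

theorem ofPos_pos (hb : 0 < b) {v : ThetaV 2 b c} (hv : v ≠ mid) : ofPos b c v.pos = v := by
  cases v with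
  | s => rfl
  | t => rw [pos, ofPos, dif_neg (by omega), dif_neg (by omega), dif_pos rfl]
  | x i => exact absurd (x_eq_mid i) hv
  | y i => rw [pos, ofPos, dif_neg (by omega), dif_pos (by omega)]; simp
  | z j =>
    have := j.isLt
    rw [pos, ofPos, dif_neg (by omega), dif_neg (by omega), dif_neg (by omega), dif_pos (by omega)]
    simp only [z.injEq, Fin.ext_iff]
    omega

theorem eq_ofPos_iff (hb : 0 < b) {v : ThetaV 2 b c} (hv : v ≠ mid) {p : ℕ} (hp : p < b + c) :
    v = ofPos b c p ↔ v.pos = p :=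
  ⟨fun h => h ▸ pos_ofPos hp, fun h => h ▸ (ofPos_pos hb hv).symm⟩

theorem adj_ofPos_succ (hb : 0 < b) (hc : 0 < c) {p : ℕ} (hp : p < b + c) :
    (thetaGraph 2 b c).Adj (ofPos b c p) (ofPos b c (p + 1)) := by
  simp only [ofPos]
  split_ifs <;> simp_all [thetaGraph, thetaRel] <;> omega

theorem adj_cases (hb : 0 < b) (hc : 0 < c) {u w : ThetaV 2 b c}
    (h : (thetaGraph 2 b c).Adj u w) :
    (u ≠ mid ∧ w ≠ mid ∧ cycDist (b + c) u.pos w.pos = 1) ∨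
      (u = mid ∧ (w = s ∨ w = t)) ∨ (w = mid ∧ (u = s ∨ u = t)) := by
  rcases u with _ | _ | i | i | i <;> rcases w with _ | _ | j | j | j <;>
    simp [thetaGraph, thetaRel, mid, pos, cycDist, Nat.dist, Fin.ext_iff] at h ⊢ <;> omega

def midDist (b c q : ℕ) : ℕ := 1 + min (cycDist (b + c) 0 q) (cycDist (b + c) b q)

def posDist (b c p q : ℕ) : ℕ :=
  min (cycDist (b + c) p q)
    (min (cycDist (b + c) p 0 + 2 + cycDist (b + c) b q)
      (cycDist (b + c) p b + 2 + cycDist (b + c) 0 q))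

/-- The distance in `Θ(2, b, c)`: a shortest walk either stays on the cycle of the `y`- and
`z`-paths or uses the path `s, mid, t` of length `2`. -/
def thetaDist (v w : ThetaV 2 b c) : ℕ :=
  if v = mid then (if w = mid then 0 else midDist b c w.pos)
  else if w = mid then midDist b c v.pos else posDist b c v.pos w.pos

@[simp] theorem thetaDist_self (v : ThetaV 2 b c) : thetaDist v v = 0 := by
  unfold thetaDist; split_ifs <;> simp [posDist]

theorem thetaDist_ofPos {p q : ℕ} (hp : p < b + c) (hq : q < b + c) :
    thetaDist (ofPos b c p) (ofPos b c q) = posDist b c p q := by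
  simp [thetaDist, ofPos_ne_mid, pos_ofPos hp, pos_ofPos hq]

theorem thetaDist_ofPos_mid {p : ℕ} (hp : p < b + c) :
    thetaDist (ofPos b c p) mid = midDist b c p := by
  simp [thetaDist, ofPos_ne_mid, pos_ofPos hp]

theorem thetaDist_le_add_one (hb : 0 < b) (hc : 0 < c) (v : ThetaV 2 b c) {u w : ThetaV 2 b c}
    (h : (thetaGraph 2 b c).Adj u w) : thetaDist v w ≤ thetaDist v u + 1 := by
  have hlt := pos_lt_add hc (b := b)
  have h0 := cycDist_comm (b + c) v.pos 0
  have hb' := cycDist_comm (b + c) v.pos b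
  rcases adj_cases hb hc h with ⟨hu, hw, huw⟩ | ⟨rfl, rfl | rfl⟩ | ⟨rfl, rfl | rfl⟩
  · have h1 := cycDist_triangle (hlt v) (hlt u) (hlt w)
    have h2 := cycDist_triangle (p := 0) (by omega) (hlt u) (hlt w)
    have h3 := cycDist_triangle (p := b) (by omega) (hlt u) (hlt w)
    simp only [thetaDist, midDist, posDist, if_neg hu, if_neg hw]
    split_ifs <;> omega
  all_goals
    by_cases hv : v = mid
    · simp [thetaDist, midDist, hv]
    · simp [thetaDist, midDist, posDist, hv]
      omega

theorem edist_ofPos_le (hb : 0 < b) (hc : 0 < c) {p q : ℕ} (hp : p < b + c) (hq : q < b + c) :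
    (thetaGraph 2 b c).edist (ofPos b c p) (ofPos b c q) ≤ cycDist (b + c) p q := by
  wlog hpq : p ≤ q generalizing p q
  · rw [SimpleGraph.edist_comm, cycDist_comm]
    exact this hq hp (by omega)
  have chain {m n : ℕ} (hmn : m ≤ n) (hn : n ≤ b + c) :
      (thetaGraph 2 b c).edist (ofPos b c m) (ofPos b c n) ≤ (n - m : ℕ) :=
    SimpleGraph.edist_le_of_adj_succ hmn fun i _ hi => adj_ofPos_succ hb hc (by omega)
  have direct := chain hpq hq.le
  have around : (thetaGraph 2 b c).edist (ofPos b c p) (ofPos b c q) ≤ (b + c - (q - p) : ℕ) :=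
    calc _ ≤ _ := SimpleGraph.edist_triangle (v := s)
      _ ≤ (p - 0 : ℕ) + (b + c - q : ℕ) := by
          rw [SimpleGraph.edist_comm, SimpleGraph.edist_comm (v := ofPos b c q)]
          gcongr
          · simpa using chain (Nat.zero_le p) hp.le
          · simpa [ofPos_add hc] using chain hq.le le_rfl
      _ = (b + c - (q - p) : ℕ) := by norm_cast; omega
  have hd : Nat.dist p q = q - p := by simp only [Nat.dist]; omega
  rw [cycDist, hd, (Nat.mono_cast (α := ℕ∞)).map_min]
  exact le_min direct around

theorem edist_le_cycDist (hb : 0 < b) (hc : 0 < c) {v w : ThetaV 2 b c} (hv : v ≠ mid)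
    (hw : w ≠ mid) : (thetaGraph 2 b c).edist v w ≤ cycDist (b + c) v.pos w.pos := by
  have hlt := pos_lt_add hc (b := b)
  simpa only [ofPos_pos hb hv, ofPos_pos hb hw] using edist_ofPos_le hb hc (hlt v) (hlt w)

theorem adj_mid_s : (thetaGraph 2 b c).Adj mid s := by simp [thetaGraph, thetaRel, mid]

theorem adj_mid_t : (thetaGraph 2 b c).Adj mid t := by simp [thetaGraph, thetaRel, mid]

theorem edist_s_t_le : (thetaGraph 2 b c).edist s t ≤ 2 :=
  calc _ ≤ (thetaGraph 2 b c).edist s mid + (thetaGraph 2 b c).edist mid t :=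
        SimpleGraph.edist_triangle
    _ = 2 := by
        rw [SimpleGraph.edist_eq_one_iff_adj.mpr adj_mid_s.symm,
          SimpleGraph.edist_eq_one_iff_adj.mpr adj_mid_t, one_add_one_eq_two]

theorem edist_mid_le (hb : 0 < b) (hc : 0 < c) {w : ThetaV 2 b c} (hw : w ≠ mid) :
    (thetaGraph 2 b c).edist mid w ≤ midDist b c w.pos := by
  have hs := edist_le_cycDist hb hc s_ne_mid hw
  have ht := edist_le_cycDist hb hc t_ne_mid hw
  rw [pos_s] at hs
  rw [pos_t] at ht
  rw [midDist, Nat.cast_add, (Nat.mono_cast (α := ℕ∞)).map_min, Nat.cast_one,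
    ← min_add_add_left]
  refine le_min ?_ ?_
  · exact SimpleGraph.edist_triangle.trans
      (add_le_add (SimpleGraph.edist_eq_one_iff_adj.mpr adj_mid_s).le hs)
  · exact SimpleGraph.edist_triangle.trans
      (add_le_add (SimpleGraph.edist_eq_one_iff_adj.mpr adj_mid_t).le ht)

theorem edist_le_cycDist_add_two_add (hb : 0 < b) (hc : 0 < c) {v w u u' : ThetaV 2 b c}
    (hv : v ≠ mid) (hw : w ≠ mid) (hu : u ≠ mid) (hu' : u' ≠ mid)
    (h : (thetaGraph 2 b c).edist u u' ≤ 2) :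
    (thetaGraph 2 b c).edist v w ≤
      (cycDist (b + c) v.pos u.pos + 2 + cycDist (b + c) u'.pos w.pos : ℕ) := by
  push_cast
  exact SimpleGraph.edist_triangle.trans (add_le_add (SimpleGraph.edist_triangle.trans
    (add_le_add (edist_le_cycDist hb hc hv hu) h)) (edist_le_cycDist hb hc hu' hw))

theorem edist_le_thetaDist (hb : 0 < b) (hc : 0 < c) (v w : ThetaV 2 b c) :
    (thetaGraph 2 b c).edist v w ≤ thetaDist v w := by
  unfold thetaDist
  split_ifs with hv hw hw
  · simp [hv, hw]
  · exact hv ▸ edist_mid_le hb hc hw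
  · exact hw ▸ SimpleGraph.edist_comm ▸ edist_mid_le hb hc hv
  · rw [posDist, (Nat.mono_cast (α := ℕ∞)).map_min, (Nat.mono_cast (α := ℕ∞)).map_min]
    refine le_min (edist_le_cycDist hb hc hv hw) (le_min ?_ ?_)
    · exact edist_le_cycDist_add_two_add hb hc hv hw s_ne_mid t_ne_mid edist_s_t_le
    · exact edist_le_cycDist_add_two_add hb hc hv hw t_ne_mid s_ne_mid
        (SimpleGraph.edist_comm ▸ edist_s_t_le)

theorem edist_eq_thetaDist (hb : 0 < b) (hc : 0 < c) (v w : ThetaV 2 b c) :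
    (thetaGraph 2 b c).edist v w = thetaDist v w := by
  refine le_antisymm (edist_le_thetaDist hb hc v w) ?_
  simpa using SimpleGraph.le_add_edist_of_adj (fun _ _ => thetaDist_le_add_one hb hc v) v w

theorem dist_eq_thetaDist (hb : 0 < b) (hc : 0 < c) (v w : ThetaV 2 b c) :
    (thetaGraph 2 b c).dist v w = thetaDist v w := by
  rw [SimpleGraph.dist, edist_eq_thetaDist hb hc, ENat.toNat_natCast]

end ThetaV

section PiSingle

variable {V ι R : Type*} [Fintype V] [DecidableEq V] [Fintype ι] [CommSemiring R]

theorem sum_mul_sum_pi_single (p : ι → V) (u : ι → R) (g : V → R) :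
    ∑ v, g v * (∑ i, Pi.single (p i) (u i) : V → R) v = ∑ i, g (p i) * u i := by
  simp only [Finset.sum_apply, Pi.single_apply, Finset.mul_sum, mul_ite, mul_zero]
  rw [Finset.sum_comm]
  simp

theorem sum_sum_mul_sum_pi_single (p : ι → V) (u : ι → R) (D : V → V → R) :
    ∑ v, ∑ w, D v w * (∑ i, Pi.single (p i) (u i) : V → R) v *
        (∑ i, Pi.single (p i) (u i) : V → R) w =
      ∑ i, ∑ j, D (p i) (p j) * u i * u j := by
  calc _ = ∑ v, ∑ j, D v (p j) * u j * (∑ i, Pi.single (p i) (u i) : V → R) v := by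
        refine Finset.sum_congr rfl fun v _ => ?_
        rw [sum_mul_sum_pi_single]
        exact Finset.sum_congr rfl fun j _ => by ring
    _ = ∑ j, ∑ i, D (p i) (p j) * u j * u i := by
        rw [Finset.sum_comm]
        exact Finset.sum_congr rfl fun j _ => sum_mul_sum_pi_single p u _
    _ = _ := by
        rw [Finset.sum_comm]
        exact Finset.sum_congr rfl fun i _ => Finset.sum_congr rfl fun j _ => by ring

end PiSingle

namespace ThetaV

variable {k l : ℕ}

/-- `y₁, y_{k+1}, y_{k+2}, z_{2l}, z_l, z_{l-1}, x₁` in the paper's notation. -/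
def witnessSupport (k l : ℕ) : Fin 7 → ThetaV 2 (2 * k + 1) (2 * l + 1) :=
  ![ofPos _ _ 1, ofPos _ _ (k + 1), ofPos _ _ (k + 2), ofPos _ _ (2 * k + 2),
    ofPos _ _ (2 * k + l + 2), ofPos _ _ (2 * k + l + 3), mid]

def witnessWeight (k l : ℕ) : Fin 7 → ℝ :=
  ![2 * k + 2 * l - 4, 11 - 4 * k - 4 * l, 4 * k + 4 * l - 13,
    2 * k + 2 * l - 4, 11 - 4 * k - 4 * l, 4 * k + 4 * l - 13,
    -2 * (2 * k + 2 * l - 4) - 2 * (11 - 4 * k - 4 * l) - 2 * (4 * k + 4 * l - 13)]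

def witness (k l : ℕ) : ThetaV 2 (2 * k + 1) (2 * l + 1) → ℝ :=
  ∑ i, Pi.single (witnessSupport k l i) (witnessWeight k l i)

def witnessSupportDist (k l : ℕ) : Fin 7 → Fin 7 → ℕ :=
  ![![0, k, k + 1, 4, l + 1, l, 2],
    ![k, 0, 1, k + 1, k + l + 1, k + l, k + 1],
    ![k + 1, 1, 0, k, k + l, k + l, k],
    ![4, k + 1, k, 0, l, l + 1, 2],
    ![l + 1, k + l + 1, k + l, l, 0, 1, l + 1],
    ![l, k + l, k + l, l + 1, 1, 0, l],
    ![2, k + 1, k, 2, l + 1, l, 0]]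

theorem dist_witnessSupport (hk : 2 ≤ k) (hl : 2 ≤ l) (i j : Fin 7) :
    (thetaGraph 2 (2 * k + 1) (2 * l + 1)).dist (witnessSupport k l i) (witnessSupport k l j) =
      witnessSupportDist k l i j := by
  wlog hij : i ≤ j generalizing i j
  · rw [SimpleGraph.dist_comm, this j i (le_of_not_ge hij)]
    fin_cases i <;> fin_cases j <;> rfl
  rw [dist_eq_thetaDist (by omega) (by omega)]
  fin_cases i <;> fin_cases j <;> simp only [Fin.reduceFinMk, Fin.reduceLE] at hij <;>
    simp (disch := omega) only [witnessSupport, witnessSupportDist, Fin.reduceFinMk, Fin.isValue,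
      Matrix.cons_val, thetaDist_ofPos, thetaDist_ofPos_mid, thetaDist_self, midDist,
      posDist, cycDist_of_le_of_two_mul_le, cycDist_of_le_of_le_two_mul, cycDist_comm _ _ 0] <;>
    (try simp (disch := omega) only [cycDist_of_le, cycDist_of_ge]) <;> omega

theorem witness_apply (v : ThetaV 2 (2 * k + 1) (2 * l + 1)) :
    witness k l v = ∑ i, if v = witnessSupport k l i then witnessWeight k l i else 0 := by
  simp only [witness, Finset.sum_apply, Pi.single_apply]

theorem witness_y (hl : 2 ≤ l) (i : Fin (2 * k + 1 - 1)) :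
    witness k l (y i) =
      if (i : ℕ) = 0 then 2 * (k : ℝ) + 2 * l - 4
      else if (i : ℕ) = k then 11 - 4 * (k : ℝ) - 4 * l
      else if (i : ℕ) = k + 1 then 4 * (k : ℝ) + 4 * l - 13
      else 0 := by
  have := i.isLt
  have hy (p : ℕ) (hp : p < 2 * k + 1 + (2 * l + 1)) :=
    eq_ofPos_iff (c := 2 * l + 1) (by omega) (v := y i) (by simp [mid]) hp
  rw [witness_apply]
  simp (disch := omega) only [Fin.sum_univ_seven, witnessSupport, witnessWeight, Fin.isValue,
    Matrix.cons_val, hy, pos, mid, reduceCtorEq, if_false]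
  split_ifs <;> first | (exfalso; omega) | ring

theorem witness_z (hk : 2 ≤ k) (hl : 2 ≤ l) (j : Fin (2 * l + 1 - 1)) :
    witness k l (z j) =
      if (j : ℕ) = 2 * l - 1 then 2 * (k : ℝ) + 2 * l - 4
      else if (j : ℕ) = l - 1 then 11 - 4 * (k : ℝ) - 4 * l
      else if (j : ℕ) = l - 2 then 4 * (k : ℝ) + 4 * l - 13
      else 0 := by
  have := j.isLt
  have hz (p : ℕ) (hp : p < 2 * k + 1 + (2 * l + 1)) :=
    eq_ofPos_iff (c := 2 * l + 1) (by omega) (v := z j) (by simp [mid]) hp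
  rw [witness_apply]
  simp (disch := omega) only [Fin.sum_univ_seven, witnessSupport, witnessWeight, Fin.isValue,
    Matrix.cons_val, hz, pos, mid, reduceCtorEq, if_false]
  split_ifs <;> first | (exfalso; omega) | ring

theorem witness_x (i : Fin (2 - 1)) :
    witness k l (x i) = -2 * (2 * (k : ℝ) + 2 * l - 4) - 2 * (11 - 4 * (k : ℝ) - 4 * l)
      - 2 * (4 * (k : ℝ) + 4 * l - 13) := by
  rw [witness_apply, x_eq_mid]
  simp [Fin.sum_univ_seven, witnessSupport, witnessWeight, (ofPos_ne_mid _).symm]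

theorem witness_s (hl : 2 ≤ l) : witness k l s = 0 := by
  have hs (p : ℕ) (hp : p < 2 * k + 1 + (2 * l + 1)) :=
    eq_ofPos_iff (c := 2 * l + 1) (by omega) s_ne_mid hp
  rw [witness_apply]
  simp (disch := omega) only [Fin.sum_univ_seven, witnessSupport, Fin.isValue,
    Matrix.cons_val, hs, pos_s, s_ne_mid, if_false]
  norm_num

theorem witness_t (hk : 2 ≤ k) (hl : 2 ≤ l) : witness k l t = 0 := by
  have ht (p : ℕ) (hp : p < 2 * k + 1 + (2 * l + 1)) :=
    eq_ofPos_iff (c := 2 * l + 1) (by omega) t_ne_mid hp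
  rw [witness_apply]
  simp (disch := omega) only [Fin.sum_univ_seven, witnessSupport, Fin.isValue,
    Matrix.cons_val, ht, pos_t, t_ne_mid, if_false]
  split_ifs <;> first | (exfalso; omega) | norm_num

theorem sum_witness (k l : ℕ) : ∑ v, witness k l v = 0 := by
  have h := sum_mul_sum_pi_single (witnessSupport k l) (witnessWeight k l) 1
  simp only [Pi.one_apply, one_mul] at h
  rw [witness, h]
  simp only [Fin.sum_univ_seven, witnessWeight, Fin.isValue, Matrix.cons_val]
  ring

theorem sum_witnessSupportDist_mul (k l : ℕ) :
    ∑ i, ∑ j, (witnessSupportDist k l i j : ℝ) * witnessWeight k l i * witnessWeight k l j =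
      2 * (4 * k + 4 * l - 13) := by
  simp only [Fin.sum_univ_seven, witnessSupportDist, witnessWeight, Fin.isValue, Matrix.cons_val]
  push_cast
  ring

end ThetaV

/-- For k, l >= 2 the theta graph Theta(2, 2k+1, 2l+1) is of non-QE class, witnessed by
the explicit function supported on y_1, z_{2l} (value u1 = 2k+2l-4), y_{k+1}, z_l
(value u2 = 11-4k-4l), y_{k+2}, z_{l-1} (value u3 = 4k+4l-13) and x_1
(value u4 = -2u1-2u2-2u3); it has zero sum and quadratic form 2(4k+4l-13) > 0.
Here the internal vertex constructor `ThetaV.y i` stands for y_{i+1}, etc. -/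
theorem stmt18 (k l : ℕ) (hk : 2 ≤ k) (hl : 2 ≤ l) :
    ∃ f : ThetaV 2 (2 * k + 1) (2 * l + 1) → ℝ,
      (∀ i : Fin (2 * k + 1 - 1), f (ThetaV.y i) =
        if (i : ℕ) = 0 then 2 * (k : ℝ) + 2 * l - 4
        else if (i : ℕ) = k then 11 - 4 * (k : ℝ) - 4 * l
        else if (i : ℕ) = k + 1 then 4 * (k : ℝ) + 4 * l - 13
        else 0) ∧
      (∀ i : Fin (2 * l + 1 - 1), f (ThetaV.z i) =
        if (i : ℕ) = 2 * l - 1 then 2 * (k : ℝ) + 2 * l - 4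
        else if (i : ℕ) = l - 1 then 11 - 4 * (k : ℝ) - 4 * l
        else if (i : ℕ) = l - 2 then 4 * (k : ℝ) + 4 * l - 13
        else 0) ∧
      (∀ i : Fin (2 - 1), f (ThetaV.x i) =
        -2 * (2 * (k : ℝ) + 2 * l - 4) - 2 * (11 - 4 * (k : ℝ) - 4 * l)
          - 2 * (4 * (k : ℝ) + 4 * l - 13)) ∧
      f ThetaV.s = 0 ∧ f ThetaV.t = 0 ∧
      (∑ v, f v) = 0 ∧
      (∑ v, ∑ w, ((thetaGraph 2 (2 * k + 1) (2 * l + 1)).dist v w : ℝ) * f v * f w)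
        = 2 * (4 * (k : ℝ) + 4 * l - 13) ∧
      0 < 2 * (4 * (k : ℝ) + 4 * l - 13) := by
  refine ⟨ThetaV.witness k l, ThetaV.witness_y hl, ThetaV.witness_z hk hl, ThetaV.witness_x,
    ThetaV.witness_s hl, ThetaV.witness_t hk hl, ThetaV.sum_witness k l, ?_, ?_⟩
  · rw [ThetaV.witness, sum_sum_mul_sum_pi_single]
    simp_rw [ThetaV.dist_witnessSupport hk hl]
    exact ThetaV.sum_witnessSupportDist_mul k l
  · have hk' : (2 : ℝ) ≤ k := by exact_mod_cast hk
    have hl' : (2 : ℝ) ≤ l := by exact_mod_cast hl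
    linarith
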